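/- Exact variational identification of the two-dimensional SIM of the three-dimensional linear model: let γ₁, γ₂ > 0 and let z be the solution with constants c₁, c₂, c₃, i.e. z₁ = c₁·e^{−t} + c₂·e^{(−1−γ₁)t} + c₃·e^{(−1−γ₂)t}, z₂ = √2·c₁·e^{−t} − √2·c₂·e^{(−1−γ₁)t}, z₃ = c₁·e^{−t} + c₂·e^{(−1−γ₁)t} − c₃·e^{(−1−γ₂)t}. Then ‖∂_t z(t)‖₂² − ‖z(t)‖₂² = 4γ₁(γ₁+2)·c₂²·e^{−2(1+γ₁)t} + 2γ₂(γ₂+2)·c₃²·e^{−2(1+γ₂)t} ≥ 0 for all t. Consequently, for any t₀ < t_f and a, b ∈ ℝ, among all solutions with z₁(t_f) = a and z₃(t_f) = b (which determine c₃ and leave one free parameter), the functional ∫_{t₀}^{t_f}(‖∂_t z(t)‖₂² − ‖z(t)‖₂²) dt is uniquely minimized by the solution with c₂ = 0, which satisfies z₂(t_f) = (a + b)/√2 and hence lies on the SIM z₂ = (z₁ + z₃)/√2. -/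
import Mathlib


open Real

/-- First component of the general solution of the 3-D linear model. -/
noncomputable def z3d₁ (γ₁ γ₂ c₁ c₂ c₃ t : ℝ) : ℝ :=
  c₁ * Real.exp (-t) + c₂ * Real.exp ((-1 - γ₁) * t) + c₃ * Real.exp ((-1 - γ₂) * t)

/-- Second component of the general solution of the 3-D linear model. -/
noncomputable def z3d₂ (γ₁ c₁ c₂ t : ℝ) : ℝ :=
  Real.sqrt 2 * c₁ * Real.exp (-t) - Real.sqrt 2 * c₂ * Real.exp ((-1 - γ₁) * t)

/-- Third component of the general solution of the 3-D linear model. -/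
noncomputable def z3d₃ (γ₁ γ₂ c₁ c₂ c₃ t : ℝ) : ℝ :=
  c₁ * Real.exp (-t) + c₂ * Real.exp ((-1 - γ₁) * t) - c₃ * Real.exp ((-1 - γ₂) * t)

/-- The functional ∫_{t₀}^{t_f} (‖∂_t z(t)‖₂² − ‖z(t)‖₂²) dt for the general solution
of the 3-D linear model with constants c₁, c₂, c₃. -/
noncomputable def linFunctional3d (γ₁ γ₂ t₀ tf c₁ c₂ c₃ : ℝ) : ℝ :=
  ∫ t in t₀..tf,
    ((deriv (z3d₁ γ₁ γ₂ c₁ c₂ c₃) t) ^ 2 + (deriv (z3d₂ γ₁ c₁ c₂) t) ^ 2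
        + (deriv (z3d₃ γ₁ γ₂ c₁ c₂ c₃) t) ^ 2
      - ((z3d₁ γ₁ γ₂ c₁ c₂ c₃ t) ^ 2 + (z3d₂ γ₁ c₁ c₂ t) ^ 2
          + (z3d₃ γ₁ γ₂ c₁ c₂ c₃ t) ^ 2))

lemma hD1 (γ₁ γ₂ c₁ c₂ c₃ t : ℝ) :
    HasDerivAt (z3d₁ γ₁ γ₂ c₁ c₂ c₃)
      (c₁ * (Real.exp (-t) * (-1)) + c₂ * (Real.exp ((-1 - γ₁) * t) * ((-1 - γ₁) * 1))
        + c₃ * (Real.exp ((-1 - γ₂) * t) * ((-1 - γ₂) * 1))) t :=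
  (((hasDerivAt_neg t).exp.const_mul c₁).add
    ((((hasDerivAt_id t).const_mul (-1 - γ₁)).exp).const_mul c₂)).add
    ((((hasDerivAt_id t).const_mul (-1 - γ₂)).exp).const_mul c₃)

lemma hD2 (γ₁ c₁ c₂ t : ℝ) :
    HasDerivAt (z3d₂ γ₁ c₁ c₂)
      (Real.sqrt 2 * c₁ * (Real.exp (-t) * (-1))
        - Real.sqrt 2 * c₂ * (Real.exp ((-1 - γ₁) * t) * ((-1 - γ₁) * 1))) t :=
  ((hasDerivAt_neg t).exp.const_mul (Real.sqrt 2 * c₁)).sub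
    ((((hasDerivAt_id t).const_mul (-1 - γ₁)).exp).const_mul (Real.sqrt 2 * c₂))

lemma hD3 (γ₁ γ₂ c₁ c₂ c₃ t : ℝ) :
    HasDerivAt (z3d₃ γ₁ γ₂ c₁ c₂ c₃)
      (c₁ * (Real.exp (-t) * (-1)) + c₂ * (Real.exp ((-1 - γ₁) * t) * ((-1 - γ₁) * 1))
        - c₃ * (Real.exp ((-1 - γ₂) * t) * ((-1 - γ₂) * 1))) t :=
  (((hasDerivAt_neg t).exp.const_mul c₁).add
    ((((hasDerivAt_id t).const_mul (-1 - γ₁)).exp).const_mul c₂)).sub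
    ((((hasDerivAt_id t).const_mul (-1 - γ₂)).exp).const_mul c₃)

lemma keyId (γ₁ γ₂ c₁ c₂ c₃ t : ℝ) :
    (deriv (z3d₁ γ₁ γ₂ c₁ c₂ c₃) t) ^ 2 + (deriv (z3d₂ γ₁ c₁ c₂) t) ^ 2
        + (deriv (z3d₃ γ₁ γ₂ c₁ c₂ c₃) t) ^ 2
        - ((z3d₁ γ₁ γ₂ c₁ c₂ c₃ t) ^ 2 + (z3d₂ γ₁ c₁ c₂ t) ^ 2
            + (z3d₃ γ₁ γ₂ c₁ c₂ c₃ t) ^ 2)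
      = 4 * γ₁ * (γ₁ + 2) * c₂ ^ 2 * Real.exp (-2 * (1 + γ₁) * t)
        + 2 * γ₂ * (γ₂ + 2) * c₃ ^ 2 * Real.exp (-2 * (1 + γ₂) * t) := by
  rw [(hD1 γ₁ γ₂ c₁ c₂ c₃ t).deriv, (hD2 γ₁ c₁ c₂ t).deriv, (hD3 γ₁ γ₂ c₁ c₂ c₃ t).deriv]
  unfold z3d₁ z3d₂ z3d₃
  have e1 : Real.exp (-2 * (1 + γ₁) * t) = Real.exp ((-1 - γ₁) * t) ^ 2 := by
    rw [← Real.exp_nat_mul]; ring_nf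
  have e2 : Real.exp (-2 * (1 + γ₂) * t) = Real.exp ((-1 - γ₂) * t) ^ 2 := by
    rw [← Real.exp_nat_mul]; ring_nf
  have hs : Real.sqrt 2 ^ 2 = 2 := Real.sq_sqrt (by norm_num)
  rw [e1, e2]
  set s := Real.sqrt 2
  set E1 := Real.exp (-t)
  set E2 := Real.exp ((-1 - γ₁) * t)
  linear_combination ((c₁ * E1 * (-1) - c₂ * (E2 * ((-1 - γ₁)))) ^ 2
    - (c₁ * E1 - c₂ * E2) ^ 2) * hs

lemma expInt (k t₀ tf : ℝ) :
    IntervalIntegrable (fun t => Real.exp (k * t)) MeasureTheory.volume t₀ tf :=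
  (Real.continuous_exp.comp (continuous_const.mul continuous_id)).intervalIntegrable t₀ tf

lemma funcVal (γ₁ γ₂ t₀ tf c₁ c₂ c₃ : ℝ) :
    linFunctional3d γ₁ γ₂ t₀ tf c₁ c₂ c₃
      = 4 * γ₁ * (γ₁ + 2) * c₂ ^ 2 * (∫ t in t₀..tf, Real.exp (-2 * (1 + γ₁) * t))
        + 2 * γ₂ * (γ₂ + 2) * c₃ ^ 2 * (∫ t in t₀..tf, Real.exp (-2 * (1 + γ₂) * t)) := by
  unfold linFunctional3d
  rw [intervalIntegral.integral_congr
    (g := fun t => 4 * γ₁ * (γ₁ + 2) * c₂ ^ 2 * Real.exp (-2 * (1 + γ₁) * t)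
      + 2 * γ₂ * (γ₂ + 2) * c₃ ^ 2 * Real.exp (-2 * (1 + γ₂) * t))
    (fun t _ => keyId γ₁ γ₂ c₁ c₂ c₃ t)]
  rw [intervalIntegral.integral_add
    ((expInt (-2 * (1 + γ₁)) t₀ tf).const_mul _)
    ((expInt (-2 * (1 + γ₂)) t₀ tf).const_mul _),
    intervalIntegral.integral_const_mul, intervalIntegral.integral_const_mul]

lemma intPos (k t₀ tf : ℝ) (h : t₀ < tf) : 0 < ∫ t in t₀..tf, Real.exp (k * t) :=
  intervalIntegral.intervalIntegral_pos_of_pos_on (expInt k t₀ tf)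
    (fun _ _ => Real.exp_pos _) h

theorem stmt14 (γ₁ γ₂ : ℝ) (hγ₁ : 0 < γ₁) (hγ₂ : 0 < γ₂) :
    (∀ c₁ c₂ c₃ t : ℝ,
      (deriv (z3d₁ γ₁ γ₂ c₁ c₂ c₃) t) ^ 2 + (deriv (z3d₂ γ₁ c₁ c₂) t) ^ 2
          + (deriv (z3d₃ γ₁ γ₂ c₁ c₂ c₃) t) ^ 2
          - ((z3d₁ γ₁ γ₂ c₁ c₂ c₃ t) ^ 2 + (z3d₂ γ₁ c₁ c₂ t) ^ 2
              + (z3d₃ γ₁ γ₂ c₁ c₂ c₃ t) ^ 2)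
        = 4 * γ₁ * (γ₁ + 2) * c₂ ^ 2 * exp (-2 * (1 + γ₁) * t)
          + 2 * γ₂ * (γ₂ + 2) * c₃ ^ 2 * exp (-2 * (1 + γ₂) * t) ∧
      0 ≤ 4 * γ₁ * (γ₁ + 2) * c₂ ^ 2 * exp (-2 * (1 + γ₁) * t)
          + 2 * γ₂ * (γ₂ + 2) * c₃ ^ 2 * exp (-2 * (1 + γ₂) * t)) ∧
    (∀ t₀ tf a b : ℝ, t₀ < tf →
      (∀ c₁ c₂ c₃ : ℝ,
        z3d₁ γ₁ γ₂ c₁ c₂ c₃ tf = a → z3d₃ γ₁ γ₂ c₁ c₂ c₃ tf = b →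
        linFunctional3d γ₁ γ₂ t₀ tf ((a + b) / 2 * exp tf) 0
            ((a - b) / 2 * exp ((1 + γ₂) * tf))
          ≤ linFunctional3d γ₁ γ₂ t₀ tf c₁ c₂ c₃ ∧
        (linFunctional3d γ₁ γ₂ t₀ tf c₁ c₂ c₃
            = linFunctional3d γ₁ γ₂ t₀ tf ((a + b) / 2 * exp tf) 0
                ((a - b) / 2 * exp ((1 + γ₂) * tf)) ↔ c₂ = 0)) ∧
      z3d₂ γ₁ ((a + b) / 2 * exp tf) 0 tf = (a + b) / Real.sqrt 2 ∧
      (∀ t : ℝ,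
        z3d₂ γ₁ ((a + b) / 2 * exp tf) 0 t
          = (z3d₁ γ₁ γ₂ ((a + b) / 2 * exp tf) 0 ((a - b) / 2 * exp ((1 + γ₂) * tf)) t
              + z3d₃ γ₁ γ₂ ((a + b) / 2 * exp tf) 0 ((a - b) / 2 * exp ((1 + γ₂) * tf)) t)
            / Real.sqrt 2)) := by
  constructor
  · intro c₁ c₂ c₃ t
    refine ⟨keyId γ₁ γ₂ c₁ c₂ c₃ t, ?_⟩
    have h1 : (0:ℝ) ≤ 4 * γ₁ * (γ₁ + 2) := by nlinarith
    have h2 : (0:ℝ) ≤ 2 * γ₂ * (γ₂ + 2) := by nlinarith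
    exact add_nonneg
      (mul_nonneg (mul_nonneg h1 (sq_nonneg _)) (Real.exp_pos _).le)
      (mul_nonneg (mul_nonneg h2 (sq_nonneg _)) (Real.exp_pos _).le)
  · intro t₀ tf a b ht
    refine ⟨?_, ?_, ?_⟩
    · intro c₁ c₂ c₃ h1 h3
      have hc3 : c₃ = (a - b) / 2 * Real.exp ((1 + γ₂) * tf) := by
        have hE : Real.exp ((1 + γ₂) * tf) * Real.exp ((-1 - γ₂) * tf) = 1 := by
          rw [← Real.exp_add, show (1 + γ₂) * tf + (-1 - γ₂) * tf = 0 by ring, Real.exp_zero]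
        have hd : 2 * c₃ * Real.exp ((-1 - γ₂) * tf) = a - b := by
          unfold z3d₁ at h1; unfold z3d₃ at h3; linarith
        have hne : Real.exp ((-1 - γ₂) * tf) ≠ 0 := (Real.exp_pos _).ne'
        field_simp
        linear_combination Real.exp ((1 + γ₂) * tf) * hd - 2 * c₃ * hE
      have hI1 := intPos (-2 * (1 + γ₁)) t₀ tf ht
      have hA : (0:ℝ) < 4 * γ₁ * (γ₁ + 2) := by nlinarith
      rw [funcVal, funcVal, hc3]
      constructor
      · nlinarith [mul_nonneg (mul_nonneg hA.le (sq_nonneg c₂)) hI1.le]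
      · constructor
        · intro h
          have hz : 4 * γ₁ * (γ₁ + 2) * c₂ ^ 2
              * (∫ t in t₀..tf, Real.exp (-2 * (1 + γ₁) * t)) = 0 := by
            linear_combination h
          have hc2 : c₂ ^ 2 = 0 := by
            by_contra hc
            have : 0 < c₂ ^ 2 := lt_of_le_of_ne (sq_nonneg _) (Ne.symm hc)
            nlinarith [mul_pos (mul_pos hA this) hI1]
          exact pow_eq_zero_iff (by norm_num) |>.mp hc2
        · intro h; rw [h]
    · unfold z3d₂
      have he : Real.exp tf * Real.exp (-tf) = 1 := by rw [← Real.exp_add]; simp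
      have hs : Real.sqrt 2 * Real.sqrt 2 = 2 := Real.mul_self_sqrt (by norm_num)
      have h2 : Real.sqrt 2 ≠ 0 := by positivity
      field_simp
      linear_combination ((a + b) * Real.sqrt 2 * Real.sqrt 2) * he + (a + b) * hs
    · intro t
      unfold z3d₂ z3d₁ z3d₃
      have hs : Real.sqrt 2 ^ 2 = 2 := Real.sq_sqrt (by norm_num)
      have h2 : Real.sqrt 2 ≠ 0 := by positivity
      field_simp
      linear_combination ((a + b) * Real.exp tf * Real.exp (-t)) * hs
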